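/- arXiv:2410.21196 — 2 statements merged into one kernel-verified Lean document; each statement's English description precedes it below -/
import Mathlib

section
/- Suppose Z>0, P>0 and P/Z < π². If u ∈ X̃²_C is an eigenvector of S_C with eigenvalue λ (i.e. u ≠ 0 and u'' − φ'' = λ u with φ = φ[u]), then λ ≤ P/Z − π² < 0. In particular, all eigenvalues of S_C are negative and bounded away from 0. -/
/-!
Multiplying the eigenvalue equation by `P Z u` and integrating, the equation for `φ` and the
boundary conditions leave `(P Z λ - P²) ∫ u² + P Z ∫ u'² = -(Z ∫ φ'² + ∫ φ²) ≤ 0`. Since `u` has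
mean zero on an interval of length one, Wirtinger's inequality `π² ∫ u² ≤ ∫ u'²` turns this into
`P Z (λ + π² - P / Z) ∫ u² ≤ 0`. Wirtinger's inequality is reduced to its Dirichlet version for
the antiderivative of `u`; on `[a, b]` that one follows from Picone's identity with the comparison
function `cos (k (x - (a + b) / 2))`, letting `k ↑ π / (b - a)`.
-/

open MeasureTheory Filter Set

noncomputable section

/-- The open interval (-1/2, 1/2). -/
def Iv : Set ℝ := Set.Ioo (-(1/2) : ℝ) (1/2)

/-- The closed interval [-1/2, 1/2]. -/
def Jv : Set ℝ := Set.Icc (-(1/2) : ℝ) (1/2)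

/-- L² norm on (-1/2, 1/2). -/
def L2n (f : ℝ → ℝ) : ℝ := Real.sqrt (∫ x in Iv, (f x) ^ 2)

/-- H¹ norm on (-1/2, 1/2). -/
def H1n (f : ℝ → ℝ) : ℝ := Real.sqrt (∫ x in Iv, ((f x) ^ 2 + (deriv f x) ^ 2))

/-- φ = φ[u]: the solution of -Z φ'' + φ = P u on (-1/2,1/2) with periodic
boundary conditions. -/
def IsPhi (Z P : ℝ) (u φ : ℝ → ℝ) : Prop :=
  ContDiff ℝ 2 φ ∧
  (∀ x ∈ Jv, -Z * deriv (deriv φ) x + φ x = P * u x) ∧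
  φ (-(1/2)) = φ (1/2) ∧ deriv φ (-(1/2)) = deriv φ (1/2)

/-- Membership in X̃²_C : H² with Neumann boundary conditions and zero mean. -/
def MemX2t (u : ℝ → ℝ) : Prop :=
  ContDiff ℝ 2 u ∧ deriv u (-(1/2)) = 0 ∧ deriv u (1/2) = 0 ∧ (∫ x in Iv, u x) = 0

open Real Topology

variable {f : ℝ → ℝ} {a b : ℝ}

lemma sq_mul_integral_sq_le_integral_deriv_sq_of_mul_lt_pi {k : ℝ} (hf : ContDiff ℝ 1 f)
    (hab : a ≤ b) (hfa : f a = 0) (hfb : f b = 0) (hk : 0 ≤ k) (hkπ : k * (b - a) < π) :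
    k ^ 2 * ∫ x in a..b, f x ^ 2 ≤ ∫ x in a..b, deriv f x ^ 2 := by
  have hfc := hf.continuous
  have hf'c := hf.continuous_deriv le_rfl
  set m := (a + b) / 2 with hm
  have hmem : ∀ x ∈ Icc a b, k * (x - m) ∈ Ioo (-(π / 2)) (π / 2) := fun x hx => by
    have h₁ := mul_le_mul_of_nonneg_left (show x - m ≤ (b - a) / 2 by linarith [hx.2]) hk
    have h₂ := mul_le_mul_of_nonneg_left (show -((b - a) / 2) ≤ x - m by linarith [hx.1]) hk
    constructor <;> nlinarith
  have hf' : ∀ x, HasDerivAt f (deriv f x) x := fun x =>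
    (hf.differentiable one_ne_zero x).hasDerivAt
  -- `G = f² h' / h` for the positive solution `h = cos (k (x - m))` of `h'' = -k² h` on `[a, b]`,
  -- and Picone's identity reads `f'² - k² f² - G' = (f' + k f tan (k (x - m)))²`.
  set G : ℝ → ℝ := fun x => -k * f x ^ 2 * tan (k * (x - m))
  set G' : ℝ → ℝ := fun x => -k * (2 * f x * deriv f x * tan (k * (x - m))
    + f x ^ 2 * (k / cos (k * (x - m)) ^ 2))
  have hG : ∀ x ∈ Icc a b, HasDerivAt G (G' x) x := fun x hx => by
    have hθ : HasDerivAt (fun y => k * (y - m)) k x := by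
      simpa using ((hasDerivAt_id x).sub_const m).const_mul k
    have := (((hf' x).pow 2).const_mul (-k)).mul
      ((hasDerivAt_tan_of_mem_Ioo (hmem x hx)).comp x hθ)
    refine this.congr_deriv ?_
    simp only [G', Function.comp_apply, Pi.pow_apply]
    ring
  have hG'le : ∀ x ∈ Icc a b, G' x ≤ deriv f x ^ 2 - k ^ 2 * f x ^ 2 := fun x hx => by
    have hcos : cos (k * (x - m)) ≠ 0 := (cos_pos_of_mem_Ioo (hmem x hx)).ne'
    have hsec : 1 / cos (k * (x - m)) ^ 2 = 1 + tan (k * (x - m)) ^ 2 := by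
      rw [one_div, ← inv_one_add_tan_sq hcos, inv_inv]
    have : G' x = -k * (2 * f x * deriv f x * tan (k * (x - m))
        + k * f x ^ 2 * (1 + tan (k * (x - m)) ^ 2)) := by
      rw [← hsec]; simp only [G']; field_simp
    rw [this]
    nlinarith [sq_nonneg (deriv f x + k * f x * tan (k * (x - m)))]
  have hpicone := intervalIntegral.sub_le_integral_of_hasDeriv_right_of_le hab
    (fun x hx => (hG x hx).continuousAt.continuousWithinAt)
    (fun x hx => (hG x (Ioo_subset_Icc_self hx)).hasDerivWithinAt)
    (Continuous.integrableOn_Icc (by fun_prop)) (fun x hx => hG'le x (Ioo_subset_Icc_self hx))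
  simp only [G, hfa, hfb] at hpicone
  rw [intervalIntegral.integral_sub, intervalIntegral.integral_const_mul] at hpicone
  · linarith
  all_goals exact Continuous.intervalIntegrable (by fun_prop) _ _

lemma pi_div_sq_mul_integral_sq_le_integral_deriv_sq (hf : ContDiff ℝ 1 f) (hab : a < b)
    (hfa : f a = 0) (hfb : f b = 0) :
    (π / (b - a)) ^ 2 * ∫ x in a..b, f x ^ 2 ≤ ∫ x in a..b, deriv f x ^ 2 := by
  have hba : 0 < b - a := sub_pos.2 hab
  refine le_of_tendsto (x := 𝓝[<] (π / (b - a)))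
    ((((continuous_pow 2).mul continuous_const).tendsto _).mono_left nhdsWithin_le_nhds) ?_
  filter_upwards [Ioo_mem_nhdsLT (div_pos pi_pos hba)] with k hk
  exact sq_mul_integral_sq_le_integral_deriv_sq_of_mul_lt_pi hf hab.le hfa hfb hk.1.le
    ((lt_div_iff₀ hba).1 hk.2)

/- The antiderivative `w` of `f` vanishes at both ends, so the Dirichlet inequality applies to it;
combined with `∫ f² = -∫ f' w` and `0 ≤ ∫ (c² w + f')²` it gives the bound for `f`. -/
lemma pi_div_sq_mul_integral_sq_le_integral_deriv_sq_of_integral_eq_zero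
    (hf : ContDiff ℝ 1 f) (hab : a < b) (hmean : ∫ x in a..b, f x = 0) :
    (π / (b - a)) ^ 2 * ∫ x in a..b, f x ^ 2 ≤ ∫ x in a..b, deriv f x ^ 2 := by
  set c := π / (b - a)
  set w : ℝ → ℝ := fun x => ∫ t in a..x, f t
  have hw : ∀ x, HasDerivAt w (f x) x := fun x =>
    (hf.continuous.integral_hasStrictDerivAt a x).hasDerivAt
  have hdw : deriv w = f := funext fun x => (hw x).deriv
  have hwC : ContDiff ℝ 1 w :=
    contDiff_one_iff_deriv.2 ⟨fun x => (hw x).differentiableAt, hdw ▸ hf.continuous⟩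
  have hf' : ∀ x, HasDerivAt f (deriv f x) x := fun x =>
    (hf.differentiable one_ne_zero x).hasDerivAt
  have := hf.continuous
  have := hf.continuous_deriv le_rfl
  have := hwC.continuous
  have hdir := pi_div_sq_mul_integral_sq_le_integral_deriv_sq hwC hab
    intervalIntegral.integral_same hmean
  rw [hdw] at hdir
  have hibp : ∫ x in a..b, f x ^ 2 = -∫ x in a..b, deriv f x * w x := by
    have := intervalIntegral.integral_mul_deriv_eq_deriv_mul (a := a) (b := b)
      (fun x _ => hf' x) (fun x _ => hw x)
      (Continuous.intervalIntegrable (by fun_prop) _ _)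
      (Continuous.intervalIntegrable (by fun_prop) _ _)
    simp only [w, intervalIntegral.integral_same, hmean, mul_zero, sub_zero, zero_sub] at this
    simpa only [sq] using this
  have hsq : 0 ≤ ∫ x in a..b, (c ^ 2 * w x + deriv f x) ^ 2 :=
    intervalIntegral.integral_nonneg hab.le fun x _ => sq_nonneg _
  have hexpand : ∫ x in a..b, (c ^ 2 * w x + deriv f x) ^ 2
      = c ^ 2 * c ^ 2 * (∫ x in a..b, w x ^ 2) + 2 * c ^ 2 * (∫ x in a..b, deriv f x * w x)
        + ∫ x in a..b, deriv f x ^ 2 := calc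
    _ = ∫ x in a..b,
          (c ^ 2 * c ^ 2 * w x ^ 2 + 2 * c ^ 2 * (deriv f x * w x) + deriv f x ^ 2) := by
      congr 1; ext x; ring
    _ = _ := by
      rw [intervalIntegral.integral_add, intervalIntegral.integral_add,
        intervalIntegral.integral_const_mul, intervalIntegral.integral_const_mul]
      all_goals exact Continuous.intervalIntegrable (by fun_prop) _ _
  nlinarith [mul_le_mul_of_nonneg_left hdir (sq_nonneg c)]

/- With `E = P Z u u' + Z φ φ'`, the two equations give pointwise
`E' = (P Z λ - P²) u² + P Z u'² + Z φ'² + φ²`, and `∫ E' = 0` by the boundary conditions. -/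
lemma energy_nonpos {Z P lam : ℝ} {u φ : ℝ → ℝ} (hu : ContDiff ℝ 2 u) (hφ : ContDiff ℝ 2 φ)
    (hab : a ≤ b) (hZ : 0 ≤ Z) (hua : deriv u a = 0) (hub : deriv u b = 0)
    (hφ₀ : φ a = φ b) (hφ₁ : deriv φ a = deriv φ b)
    (hφeq : ∀ x ∈ Icc a b, -Z * deriv (deriv φ) x + φ x = P * u x)
    (heig : ∀ x ∈ Icc a b, deriv (deriv u) x - deriv (deriv φ) x = lam * u x) :
    (P * Z * lam - P ^ 2) * (∫ x in a..b, u x ^ 2) + P * Z * ∫ x in a..b, deriv u x ^ 2 ≤ 0 := by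
  have hu1 : ContDiff ℝ 1 (deriv u) := hu.deriv' (n := 1)
  have hφ1 : ContDiff ℝ 1 (deriv φ) := hφ.deriv' (n := 1)
  have := hu1.continuous_deriv le_rfl
  have := hφ1.continuous_deriv le_rfl
  have := hu1.continuous
  have := hφ1.continuous
  have := hu.continuous
  have := hφ.continuous
  set E' : ℝ → ℝ := fun x => P * Z * (deriv u x ^ 2 + u x * deriv (deriv u) x)
    + Z * (deriv φ x ^ 2 + φ x * deriv (deriv φ) x)
  have hE : ∀ x, HasDerivAt (fun y => P * Z * (u y * deriv u y) + Z * (φ y * deriv φ y)) (E' x) x :=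
    fun x => by
    have hd : ∀ {g : ℝ → ℝ}, ContDiff ℝ 2 g → ContDiff ℝ 1 (deriv g) →
        HasDerivAt (fun y => g y * deriv g y) (deriv g x ^ 2 + g x * deriv (deriv g) x) x :=
      fun hg hg1 => (((hg.differentiable two_ne_zero x).hasDerivAt).mul
        ((hg1.differentiable one_ne_zero x).hasDerivAt)).congr_deriv (by ring)
    exact ((hd hu hu1).const_mul _).add ((hd hφ hφ1).const_mul _)
  have hftc : ∫ x in a..b, E' x = 0 := by
    rw [intervalIntegral.integral_eq_sub_of_hasDerivAt (fun x _ => hE x)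
      (Continuous.intervalIntegrable (by fun_prop) _ _)]
    simp only [hua, hub, hφ₀, hφ₁]
    ring
  have hle : ∫ x in a..b, ((P * Z * lam - P ^ 2) * u x ^ 2 + P * Z * deriv u x ^ 2)
      ≤ ∫ x in a..b, E' x := by
    refine intervalIntegral.integral_mono_on hab (Continuous.intervalIntegrable (by fun_prop) _ _)
      (Continuous.intervalIntegrable (by fun_prop) _ _) fun x hx => ?_
    have hE'x : E' x = (P * Z * lam - P ^ 2) * u x ^ 2 + P * Z * deriv u x ^ 2
        + (Z * deriv φ x ^ 2 + φ x ^ 2) := by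
      linear_combination (P * Z * u x) * heig x hx - (φ x + P * u x) * hφeq x hx
    rw [hE'x]
    nlinarith [mul_nonneg hZ (sq_nonneg (deriv φ x)), sq_nonneg (φ x)]
  rw [intervalIntegral.integral_add, intervalIntegral.integral_const_mul,
    intervalIntegral.integral_const_mul, hftc] at hle
  · exact hle
  all_goals exact Continuous.intervalIntegrable (by fun_prop) _ _

lemma setIntegral_Iv_eq_intervalIntegral (g : ℝ → ℝ) :
    ∫ x in Iv, g x = ∫ x in -(1 / 2)..1 / 2, g x := by
  rw [intervalIntegral.integral_of_le (by norm_num), integral_Ioc_eq_integral_Ioo, Iv]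

/-- if P/Z < π², every eigenvalue λ of S_C satisfies
λ ≤ P/Z - π² < 0. -/
theorem SC_eigenvalues_negative
    (Z P lam : ℝ) (hZ : 0 < Z) (hP : 0 < P) (hPZ : P / Z < Real.pi ^ 2)
    (u φ : ℝ → ℝ) (hu : MemX2t u) (hne : ∃ x ∈ Jv, u x ≠ 0)
    (hφ : IsPhi Z P u φ)
    (heig : ∀ x ∈ Jv, deriv (deriv u) x - deriv (deriv φ) x = lam * u x) :
    lam ≤ P / Z - Real.pi ^ 2 ∧ P / Z - Real.pi ^ 2 < 0 := by
  obtain ⟨hu, hua, hub, hmean⟩ := hu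
  obtain ⟨hφ, hφeq, hφ₀, hφ₁⟩ := hφ
  have hA : 0 < ∫ x in -(1 / 2)..1 / 2, u x ^ 2 := by
    obtain ⟨x₀, hx₀, hux₀⟩ := hne
    exact intervalIntegral.integral_pos (by norm_num) (hu.continuous.pow 2).continuousOn
      (fun x _ => sq_nonneg (u x)) ⟨x₀, hx₀, by positivity⟩
  have hwirt := pi_div_sq_mul_integral_sq_le_integral_deriv_sq_of_integral_eq_zero
    (hu.of_le one_le_two) (by norm_num) ((setIntegral_Iv_eq_intervalIntegral u).symm.trans hmean)
  norm_num at hwirt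
  have henergy := energy_nonpos hu hφ (by norm_num) hZ.le hua hub hφ₀ hφ₁ hφeq heig
  refine ⟨?_, sub_neg.2 hPZ⟩
  rw [le_sub_iff_add_le, le_div_iff₀ hZ]
  nlinarith [mul_le_mul_of_nonneg_left hwirt (mul_pos hP hZ).le, mul_pos hP hA]
end
end

section
/- There exists a constant C>0, independent of u, P and Z, such that for every u ∈ H²(−1/2,1/2) with u'(±1/2)=0 and ∫_{−1/2}^{1/2} u dx = 0, the nonlinear part satisfies ‖Ψ(u)‖_{L²} ≤ C (P/Z) ‖u‖_{L²} ‖u‖_{H¹}. -/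
open MeasureTheory Filter Set

noncomputable section

/-- The nonlinear part Ψ(u) = φ'(1/2) u' - (u φ')' (with φ = φ[u]). -/
def PsiOp (u φ : ℝ → ℝ) (x : ℝ) : ℝ :=
  deriv φ (1/2) * deriv u x - deriv (fun y => u y * deriv φ y) x

/-!
Expanding the derivative of the product, `Ψ(u) = (φ'(1/2) - φ') u' - u φ''`. Both factors
`φ'(1/2) - φ'` and `u` are bounded pointwise: the first by `‖φ''‖_{L²}` (fundamental theorem of
calculus on an interval of length one, then Cauchy–Schwarz), the second by `‖u‖_{H¹}`, because `u`
has a zero (it has mean zero) and `u² = ∫ 2 u u' ≤ ∫ (u² + u'²)`. Testing the equation for `φ`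
against `φ''` and integrating `φ φ''` by parts with the periodic boundary conditions gives
`Z ‖φ''‖² ≤ -P ∫ u φ'' ≤ P ‖u‖ ‖φ''‖`, so `‖φ''‖ ≤ (P/Z) ‖u‖`. Hence
`‖Ψ(u)‖ ≤ ‖φ''‖ ‖u'‖ + ‖u‖_∞ ‖φ''‖ ≤ 2 (P/Z) ‖u‖_{L²} ‖u‖_{H¹}`.
-/

section SquareIntegrable

variable {α : Type*} [MeasurableSpace α] {μ : Measure α} {f g : α → ℝ}

theorem integral_const_mul_add_sq (hf : MemLp f 2 μ) (hg : MemLp g 2 μ) (t : ℝ) :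
    ∫ x, (t * f x + g x) ^ 2 ∂μ
      = t ^ 2 * (∫ x, f x ^ 2 ∂μ) + 2 * t * (∫ x, f x * g x ∂μ) + ∫ x, g x ^ 2 ∂μ := by
  have hfg : Integrable (fun x => f x * g x) μ := hf.integrable_mul hg
  have e : (fun x => (t * f x + g x) ^ 2)
      = fun x => t ^ 2 * f x ^ 2 + (2 * t * (f x * g x) + g x ^ 2) := by
    ext x; ring
  rw [e, integral_add (hf.integrable_sq.const_mul _) ((hfg.const_mul _).fun_add hg.integrable_sq),
    integral_add (hfg.const_mul _) hg.integrable_sq, integral_const_mul, integral_const_mul]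
  ring

theorem integral_mul_le_sqrt_mul_sqrt (hf : MemLp f 2 μ) (hg : MemLp g 2 μ) :
    ∫ x, f x * g x ∂μ ≤ √(∫ x, f x ^ 2 ∂μ) * √(∫ x, g x ^ 2 ∂μ) := by
  have hquad : ∀ t : ℝ, 0 ≤ (∫ x, f x ^ 2 ∂μ) * (t * t) + (2 * ∫ x, f x * g x ∂μ) * t
      + ∫ x, g x ^ 2 ∂μ := fun t => by
    have h : 0 ≤ ∫ x, (t * f x + g x) ^ 2 ∂μ := integral_nonneg fun x => sq_nonneg _
    rw [integral_const_mul_add_sq hf hg] at h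
    linarith
  have hsq : (∫ x, f x * g x ∂μ) ^ 2 ≤ (∫ x, f x ^ 2 ∂μ) * ∫ x, g x ^ 2 ∂μ := by
    have := discrim_le_zero hquad
    unfold discrim at this
    linarith
  rw [← Real.sqrt_mul (integral_nonneg fun x => sq_nonneg (f x))]
  exact (le_abs_self _).trans (Real.abs_le_sqrt hsq)

theorem sqrt_integral_add_sq_le (hf : MemLp f 2 μ) (hg : MemLp g 2 μ) :
    √(∫ x, (f x + g x) ^ 2 ∂μ) ≤ √(∫ x, f x ^ 2 ∂μ) + √(∫ x, g x ^ 2 ∂μ) := by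
  have hexp := integral_const_mul_add_sq hf hg 1
  simp only [one_mul, one_pow] at hexp
  rw [Real.sqrt_le_iff]
  refine ⟨by positivity, ?_⟩
  rw [hexp, add_sq, Real.sq_sqrt (integral_nonneg fun x => sq_nonneg (f x)),
    Real.sq_sqrt (integral_nonneg fun x => sq_nonneg (g x))]
  linarith [integral_mul_le_sqrt_mul_sqrt hf hg]

theorem sqrt_integral_sq_le_of_abs_le {c : ℝ} (hc : 0 ≤ c) (hg : MemLp g 2 μ)
    (h : ∀ᵐ x ∂μ, |f x| ≤ c * |g x|) :
    √(∫ x, f x ^ 2 ∂μ) ≤ c * √(∫ x, g x ^ 2 ∂μ) := by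
  rw [← Real.sqrt_sq hc, ← Real.sqrt_mul (sq_nonneg c), ← integral_const_mul]
  refine Real.sqrt_le_sqrt (integral_mono_of_nonneg (ae_of_all _ fun x => sq_nonneg _)
    (hg.integrable_sq.const_mul _) ?_)
  filter_upwards [h] with x hx
  calc f x ^ 2 = |f x| ^ 2 := (sq_abs _).symm
    _ ≤ (c * |g x|) ^ 2 := pow_le_pow_left₀ (abs_nonneg _) hx 2
    _ = c ^ 2 * g x ^ 2 := by rw [mul_pow, sq_abs]

end SquareIntegrable

theorem measurableSet_Iv : MeasurableSet Iv := measurableSet_Ioo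

theorem volume_real_Iv : volume.real Iv = 1 := by
  rw [Iv, Real.volume_real_Ioo]
  norm_num

theorem Continuous.integrableOn_Iv {f : ℝ → ℝ} (hf : Continuous f) : IntegrableOn f Iv :=
  hf.integrableOn_Icc.mono_set Ioo_subset_Icc_self

theorem Continuous.memLp_two_Iv {f : ℝ → ℝ} (hf : Continuous f) :
    MemLp f 2 (volume.restrict Iv) :=
  (memLp_two_iff_integrable_sq hf.aestronglyMeasurable).2 (hf.pow 2).integrableOn_Iv

theorem integral_Iv_eq_intervalIntegral (f : ℝ → ℝ) :
    ∫ x in Iv, f x = ∫ x in (-(1/2) : ℝ)..(1/2), f x := by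
  rw [intervalIntegral.integral_of_le (by norm_num), integral_Ioc_eq_integral_Ioo, Iv]

theorem L2n_nonneg (f : ℝ → ℝ) : 0 ≤ L2n f := Real.sqrt_nonneg _

theorem H1n_nonneg (f : ℝ → ℝ) : 0 ≤ H1n f := Real.sqrt_nonneg _

theorem L2n_add_le {f g : ℝ → ℝ} (hf : Continuous f) (hg : Continuous g) :
    L2n (f + g) ≤ L2n f + L2n g :=
  sqrt_integral_add_sq_le hf.memLp_two_Iv hg.memLp_two_Iv

theorem L2n_le_of_abs_le {f g : ℝ → ℝ} {c : ℝ} (hc : 0 ≤ c) (hg : Continuous g)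
    (h : ∀ x ∈ Iv, |f x| ≤ c * |g x|) : L2n f ≤ c * L2n g :=
  sqrt_integral_sq_le_of_abs_le hc hg.memLp_two_Iv (ae_restrict_of_forall_mem measurableSet_Iv h)

theorem L2n_deriv_le_H1n {u : ℝ → ℝ} (hu : ContDiff ℝ 1 u) : L2n (deriv u) ≤ H1n u := by
  have hu' := hu.continuous_deriv le_rfl
  exact Real.sqrt_le_sqrt (setIntegral_mono (hu'.pow 2).integrableOn_Iv
    ((hu.continuous.pow 2).add (hu'.pow 2)).integrableOn_Iv
    fun x => le_add_of_nonneg_left (sq_nonneg (u x)))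

theorem abs_intervalIntegral_le_integral_Iv_abs {h : ℝ → ℝ} (hh : Continuous h) {c d : ℝ}
    (hc : c ∈ Jv) (hd : d ∈ Jv) : |∫ t in c..d, h t| ≤ ∫ t in Iv, |h t| := by
  have hsub : uIoc c d ⊆ Ioc (-(1/2)) (1/2) := fun t ht =>
    ⟨(le_min hc.1 hd.1).trans_lt ht.1, ht.2.trans (max_le hc.2 hd.2)⟩
  calc |∫ t in c..d, h t| ≤ ∫ t in uIoc c d, |h t| := by
        simpa only [Real.norm_eq_abs] using
          intervalIntegral.norm_integral_le_integral_norm_uIoc (f := h) (μ := volume)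
    _ ≤ ∫ t in Ioc (-(1/2)) (1/2), |h t| :=
        setIntegral_mono_set hh.abs.integrableOn_Ioc (ae_of_all _ fun t => abs_nonneg (h t))
          hsub.eventuallyLE
    _ = ∫ t in Iv, |h t| := integral_Ioc_eq_integral_Ioo

theorem abs_intervalIntegral_le_L2n {h : ℝ → ℝ} (hh : Continuous h) {c d : ℝ}
    (hc : c ∈ Jv) (hd : d ∈ Jv) : |∫ t in c..d, h t| ≤ L2n h := by
  calc |∫ t in c..d, h t| ≤ ∫ t in Iv, |h t| * 1 := by
        simpa using abs_intervalIntegral_le_integral_Iv_abs hh hc hd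
    _ ≤ √(∫ t in Iv, |h t| ^ 2) * √(∫ _ in Iv, (1 : ℝ) ^ 2) :=
        integral_mul_le_sqrt_mul_sqrt hh.abs.memLp_two_Iv continuous_const.memLp_two_Iv
    _ = L2n h := by simp [L2n, volume_real_Iv]

theorem abs_sub_le_L2n_deriv {g : ℝ → ℝ} (hg : ContDiff ℝ 1 g) {x y : ℝ}
    (hx : x ∈ Jv) (hy : y ∈ Jv) : |g y - g x| ≤ L2n (deriv g) := by
  have hg' := hg.continuous_deriv le_rfl
  rw [← intervalIntegral.integral_deriv_eq_sub (fun t _ => hg.differentiable one_ne_zero t)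
    (hg'.intervalIntegrable _ _)]
  exact abs_intervalIntegral_le_L2n hg' hx hy

theorem exists_mem_Iv_eq_zero_of_integral_eq_zero {u : ℝ → ℝ} (hu : Continuous u)
    (hmean : ∫ x in Iv, u x = 0) : ∃ y ∈ Iv, u y = 0 := by
  obtain ⟨y, hy, hyu⟩ := exists_eq_setAverage (s := Iv) (isConnected_Ioo (by norm_num))
    hu.continuousOn hu.integrableOn_Iv (by simp [Iv]) (by norm_num [Iv])
  exact ⟨y, hy, by rw [hyu, setAverage_eq, hmean, smul_zero]⟩

theorem abs_le_H1n_of_integral_eq_zero {u : ℝ → ℝ} (hu : ContDiff ℝ 1 u)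
    (hmean : ∫ x in Iv, u x = 0) {x : ℝ} (hx : x ∈ Jv) : |u x| ≤ H1n u := by
  obtain ⟨y, hy, hy0⟩ := exists_mem_Iv_eq_zero_of_integral_eq_zero hu.continuous hmean
  have hu' := hu.continuous_deriv le_rfl
  have hcont : Continuous fun t => deriv u t * u t + u t * deriv u t := by fun_prop
  have hftc : ∫ t in y..x, (deriv u t * u t + u t * deriv u t) = u x ^ 2 := by
    rw [intervalIntegral.integral_eq_sub_of_hasDerivAt
      (fun t _ => (hu.differentiable one_ne_zero t).hasDerivAt.fun_mul
        (hu.differentiable one_ne_zero t).hasDerivAt)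
      (hcont.intervalIntegrable _ _), hy0]
    ring
  refine Real.abs_le_sqrt ?_
  calc u x ^ 2 = |∫ t in y..x, (deriv u t * u t + u t * deriv u t)| := by
        rw [hftc, abs_sq]
    _ ≤ ∫ t in Iv, |deriv u t * u t + u t * deriv u t| :=
        abs_intervalIntegral_le_integral_Iv_abs hcont (Ioo_subset_Icc_self hy) hx
    _ ≤ ∫ t in Iv, (u t ^ 2 + deriv u t ^ 2) :=
        setIntegral_mono hcont.abs.integrableOn_Iv
          (by fun_prop : Continuous _).integrableOn_Iv fun t =>
            abs_le.2 ⟨by nlinarith [sq_nonneg (u t + deriv u t)],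
              by nlinarith [sq_nonneg (u t - deriv u t)]⟩

theorem integral_Iv_mul_deriv_deriv_of_periodic {φ : ℝ → ℝ} (hφ : ContDiff ℝ 2 φ)
    (h0 : φ (-(1/2)) = φ (1/2)) (h1 : deriv φ (-(1/2)) = deriv φ (1/2)) :
    ∫ x in Iv, φ x * deriv (deriv φ) x = -∫ x in Iv, deriv φ x ^ 2 := by
  have hφ' : ContDiff ℝ 1 (deriv φ) := hφ.deriv'
  rw [integral_Iv_eq_intervalIntegral, integral_Iv_eq_intervalIntegral,
    intervalIntegral.integral_mul_deriv_eq_deriv_mul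
      (fun x _ => (hφ.differentiable two_ne_zero x).hasDerivAt)
      (fun x _ => (hφ'.differentiable one_ne_zero x).hasDerivAt)
      ((hφ.continuous_deriv one_le_two).intervalIntegrable _ _)
      ((hφ'.continuous_deriv le_rfl).intervalIntegrable _ _), h0, h1]
  simp only [sq, sub_self, zero_sub]

theorem IsPhi.L2n_deriv_deriv_le {Z P : ℝ} {u φ : ℝ → ℝ} (hZ : 0 < Z) (hP : 0 ≤ P)
    (hu : Continuous u) (hφ : IsPhi Z P u φ) :
    L2n (deriv (deriv φ)) ≤ P / Z * L2n u := by
  obtain ⟨hφ2, hode, h0, h1⟩ := hφ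
  set φ'' := deriv (deriv φ)
  have hφ'' : Continuous φ'' := (hφ2.deriv' : ContDiff ℝ 1 (deriv φ)).continuous_deriv le_rfl
  have htest : ∀ x ∈ Iv, Z * φ'' x ^ 2 = φ x * φ'' x + P * (u x * -φ'' x) := fun x hx => by
    linear_combination (-φ'' x) * hode x (Ioo_subset_Icc_self hx)
  have henergy : Z * ∫ x in Iv, φ'' x ^ 2
      = -(∫ x in Iv, deriv φ x ^ 2) + P * ∫ x in Iv, u x * -φ'' x := by
    rw [← integral_const_mul, setIntegral_congr_fun measurableSet_Iv htest,
      integral_add (hφ2.continuous.fun_mul hφ'').integrableOn_Iv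
        ((hu.fun_mul hφ''.fun_neg).const_mul P).integrableOn_Iv,
      integral_const_mul, integral_Iv_mul_deriv_deriv_of_periodic hφ2 h0 h1]
  have hcs : ∫ x in Iv, u x * -φ'' x ≤ L2n u * L2n φ'' := by
    simpa [L2n] using integral_mul_le_sqrt_mul_sqrt hu.memLp_two_Iv hφ''.neg.memLp_two_Iv
  have hsq : L2n φ'' ^ 2 = ∫ x in Iv, φ'' x ^ 2 :=
    Real.sq_sqrt (setIntegral_nonneg measurableSet_Iv fun x _ => sq_nonneg _)
  have hkey : Z * L2n φ'' ^ 2 ≤ P * L2n u * L2n φ'' := by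
    rw [hsq, henergy, mul_assoc]
    nlinarith [mul_le_mul_of_nonneg_left hcs hP,
      setIntegral_nonneg (μ := volume) measurableSet_Iv fun x _ => sq_nonneg (deriv φ x)]
  rw [div_mul_eq_mul_div, le_div_iff₀ hZ]
  rcases (L2n_nonneg φ'').eq_or_lt with h | h
  · rw [← h, zero_mul]
    exact mul_nonneg hP (L2n_nonneg u)
  · nlinarith

theorem PsiOp_eq {u φ : ℝ → ℝ} (hu : Differentiable ℝ u) (hφ : Differentiable ℝ (deriv φ)) :
    PsiOp u φ = (fun x => (deriv φ (1/2) - deriv φ x) * deriv u x)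
      + fun x => -(u x * deriv (deriv φ) x) := by
  funext x
  rw [PsiOp, Pi.add_apply, ((hu x).hasDerivAt.fun_mul (hφ x).hasDerivAt).deriv]
  ring

/-- there is a constant C > 0 independent of u, P and Z with
‖Ψ(u)‖_{L²} ≤ C (P/Z) ‖u‖_{L²} ‖u‖_{H¹}. -/
theorem Psi_estimate :
    ∃ C > 0, ∀ Z P : ℝ, 0 < Z → 0 < P → ∀ u φ : ℝ → ℝ,
      MemX2t u → IsPhi Z P u φ →
      L2n (PsiOp u φ) ≤ C * (P / Z) * L2n u * H1n u := by
  refine ⟨2, two_pos, fun Z P hZ hP u φ hu hφ => ?_⟩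
  obtain ⟨hu2, -, -, hmean⟩ := hu
  have hu1 : ContDiff ℝ 1 u := hu2.of_le one_le_two
  have hφ1 : ContDiff ℝ 1 (deriv φ) := hφ.1.deriv'
  have hu' := hu1.continuous_deriv le_rfl
  have hφ' := hφ.1.continuous_deriv one_le_two
  have hφ'' := hφ1.continuous_deriv le_rfl
  have hJ : (1/2 : ℝ) ∈ Jv := ⟨by norm_num, le_rfl⟩
  have hφL := hφ.L2n_deriv_deriv_le hZ hP.le hu2.continuous
  calc L2n (PsiOp u φ)
      ≤ L2n (fun x => (deriv φ (1/2) - deriv φ x) * deriv u x)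
        + L2n (fun x => -(u x * deriv (deriv φ) x)) := by
        rw [PsiOp_eq (hu1.differentiable one_ne_zero) (hφ1.differentiable one_ne_zero)]
        exact L2n_add_le (by fun_prop) (by fun_prop)
    _ ≤ L2n (deriv (deriv φ)) * L2n (deriv u) + H1n u * L2n (deriv (deriv φ)) := by
        gcongr
        · exact L2n_le_of_abs_le (L2n_nonneg _) hu' fun x hx => by
            rw [abs_mul]
            exact mul_le_mul_of_nonneg_right
              (abs_sub_le_L2n_deriv hφ1 (Ioo_subset_Icc_self hx) hJ) (abs_nonneg _)
        · exact L2n_le_of_abs_le (H1n_nonneg _) hφ'' fun x hx => by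
            rw [abs_neg, abs_mul]
            exact mul_le_mul_of_nonneg_right
              (abs_le_H1n_of_integral_eq_zero hu1 hmean (Ioo_subset_Icc_self hx)) (abs_nonneg _)
    _ ≤ P / Z * L2n u * H1n u + H1n u * (P / Z * L2n u) :=
        add_le_add
          (mul_le_mul hφL (L2n_deriv_le_H1n hu1) (L2n_nonneg _)
            (mul_nonneg (div_nonneg hP.le hZ.le) (L2n_nonneg u)))
          (mul_le_mul_of_nonneg_left hφL (H1n_nonneg u))
    _ = 2 * (P / Z) * L2n u * H1n u := by ring
end
end
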